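/- arXiv:1907.00947 — 8 statements merged into one kernel-verified Lean document; each statement's English description precedes it below -/
import Mathlib

section
/- A module M is idempotent-liftable if and only if M is π-projective. -/
/-- A module is automorphism-liftable if every automorphism of any factor module
lifts to an endomorphism of the module along the natural projection. -/
def AutLiftable (R M : Type*) [Ring R] [AddCommGroup M] [Module R M] : Prop :=
  ∀ (N : Submodule R M) (fbar : (M ⧸ N) ≃ₗ[R] (M ⧸ N)),
    ∃ f : M →ₗ[R] M, (fbar : (M ⧸ N) →ₗ[R] (M ⧸ N)) ∘ₗ N.mkQ = N.mkQ ∘ₗ f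

/-- A module is endomorphism-liftable if every endomorphism of any factor module
lifts to an endomorphism of the module along the natural projection. -/
def EndLiftable (R M : Type*) [Ring R] [AddCommGroup M] [Module R M] : Prop :=
  ∀ (N : Submodule R M) (fbar : (M ⧸ N) →ₗ[R] (M ⧸ N)),
    ∃ f : M →ₗ[R] M, fbar ∘ₗ N.mkQ = N.mkQ ∘ₗ f

/-- A module is idempotent-liftable if every idempotent endomorphism of any factor
module lifts to an endomorphism of the module along the natural projection. -/
def IdemLiftable (R M : Type*) [Ring R] [AddCommGroup M] [Module R M] : Prop :=
  ∀ (N : Submodule R M) (fbar : (M ⧸ N) →ₗ[R] (M ⧸ N)), fbar ∘ₗ fbar = fbar →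
    ∃ f : M →ₗ[R] M, fbar ∘ₗ N.mkQ = N.mkQ ∘ₗ f

/-- A module is strongly automorphism-liftable if every automorphism of any factor
module lifts to an automorphism of the module along the natural projection. -/
def StrongAutLiftable (R M : Type*) [Ring R] [AddCommGroup M] [Module R M] : Prop :=
  ∀ (N : Submodule R M) (fbar : (M ⧸ N) ≃ₗ[R] (M ⧸ N)),
    ∃ f : M ≃ₗ[R] M, (fbar : (M ⧸ N) →ₗ[R] (M ⧸ N)) ∘ₗ N.mkQ
      = N.mkQ ∘ₗ (f : M →ₗ[R] M)

/-- A module is π-projective if whenever `X + Y = M` there are endomorphisms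
`f`, `g` with `f + g = 1`, `range f ≤ X` and `range g ≤ Y`. -/
def PiProjective (R M : Type*) [Ring R] [AddCommGroup M] [Module R M] : Prop :=
  ∀ X Y : Submodule R M, X ⊔ Y = ⊤ →
    ∃ f g : M →ₗ[R] M, f + g = LinearMap.id ∧
      LinearMap.range f ≤ X ∧ LinearMap.range g ≤ Y

/-- A module is quasi-projective if every homomorphism to a factor module lifts
to an endomorphism along the natural projection. -/
def QuasiProjective (R M : Type*) [Ring R] [AddCommGroup M] [Module R M] : Prop :=
  ∀ (N : Submodule R M) (fbar : M →ₗ[R] M ⧸ N),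
    ∃ f : M →ₗ[R] M, N.mkQ ∘ₗ f = fbar

/-!
An idempotent `e` of `M ⧸ N` is the same as a decomposition `M ⧸ N = range e ⊕ ker e`, i.e. a
pair of submodules `X, Y ⊇ N` of `M` with `X + Y = M` and `X ∩ Y = N` (pull back the range and
the kernel). An endomorphism `f` of `M` lifts `e` exactly when `f M ⊆ X` and `(1 - f) M ⊆ Y`,
so liftability of all idempotents and π-projectivity are the same condition read both ways.
-/

namespace Submodule

variable {R M Q : Type*} [Ring R] [AddCommGroup M] [Module R M] [AddCommGroup Q] [Module R Q]

theorem isCompl_map_mkQ_inf {X Y : Submodule R M} (h : X ⊔ Y = ⊤) :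
    IsCompl (X.map (X ⊓ Y).mkQ) (Y.map (X ⊓ Y).mkQ) := by
  refine ⟨disjoint_iff.2 <| comap_injective_of_surjective (X ⊓ Y).mkQ_surjective ?_, ?_⟩
  · rw [comap_inf, comap_map_mkQ, comap_map_mkQ, sup_of_le_right inf_le_left,
      sup_of_le_right inf_le_right, comap_bot, ker_mkQ]
  · rw [codisjoint_iff, ← map_sup, h, map_top, range_mkQ]

theorem codisjoint_comap_of_surjective {π : M →ₗ[R] Q} (hπ : Function.Surjective π)
    {P P' : Submodule R Q} (h : Codisjoint P P') : Codisjoint (P.comap π) (P'.comap π) := by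
  refine codisjoint_iff.2 <| eq_top_iff.2 fun m _ ↦ ?_
  obtain ⟨p, hp, p', hp', hpp'⟩ := mem_sup.1 (h.eq_top ▸ mem_top : π m ∈ P ⊔ P')
  obtain ⟨a, rfl⟩ := hπ p
  have hma : m - a ∈ P'.comap π := by
    rwa [mem_comap, map_sub, ← hpp', add_sub_cancel_left]
  simpa using add_mem_sup (show a ∈ P.comap π from hp) hma

end Submodule

namespace LinearMap

open Submodule

variable {R M Q : Type*} [Ring R] [AddCommGroup M] [Module R M] [AddCommGroup Q] [Module R Q]

theorem IsIdempotentElem.comp_eq_comp_iff_range_le_comap {e : Q →ₗ[R] Q}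
    (he : IsIdempotentElem e) (π : M →ₗ[R] Q) (f : M →ₗ[R] M) :
    e ∘ₗ π = π ∘ₗ f ↔ range f ≤ (range e).comap π ∧ range (id - f) ≤ (ker e).comap π := by
  constructor
  · intro h
    have hπf (m : M) : π (f m) = e (π m) := (congr($h m)).symm
    refine ⟨?_, ?_⟩ <;> rintro _ ⟨m, rfl⟩ <;> rw [mem_comap]
    · exact hπf m ▸ mem_range_self e (π m)
    · rw [mem_ker, sub_apply, id_apply, map_sub, map_sub, hπf, ← Module.End.mul_apply, he.eq,
        sub_self]
  · rintro ⟨hf, hg⟩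
    ext m
    have hfix : e (π (f m)) = π (f m) :=
      (IsIdempotentElem.mem_range_iff he).1 (hf (mem_range_self f m))
    have hker : e (π (m - f m)) = 0 := hg (mem_range_self (id - f) m)
    calc e (π m) = e (π (f m)) + e (π (m - f m)) := by rw [← map_add, ← map_add, add_sub_cancel]
      _ = π (f m) := by rw [hfix, hker, add_zero]

end LinearMap

open Submodule LinearMap in
/-- A module is idempotent-liftable iff it is π-projective. -/
theorem idemLiftable_iff_piProjective
    (R M : Type*) [Ring R] [AddCommGroup M] [Module R M] :
    IdemLiftable R M ↔ PiProjective R M := by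
  constructor
  · intro hlift X Y hXY
    have hc := isCompl_map_mkQ_inf hXY
    obtain ⟨f, hf⟩ := hlift _ _ (isIdempotentElem_projection hc)
    rw [IsIdempotentElem.comp_eq_comp_iff_range_le_comap (isIdempotentElem_projection hc),
      range_projection, ker_projection, comap_map_mkQ, comap_map_mkQ,
      sup_of_le_right inf_le_left, sup_of_le_right inf_le_right] at hf
    exact ⟨f, LinearMap.id - f, add_sub_cancel f LinearMap.id, hf⟩
  · intro hpi N e he
    have hcod := codisjoint_comap_of_surjective N.mkQ_surjective
      (IsIdempotentElem.isCompl he).codisjoint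
    obtain ⟨f, g, hfg, hf, hg⟩ := hpi _ _ hcod.eq_top
    refine ⟨f, (IsIdempotentElem.comp_eq_comp_iff_range_le_comap he N.mkQ f).2 ⟨hf, ?_⟩⟩
    rw [← hfg, add_sub_cancel_left]
    exact hg
end

section
/- If A is a ring in which 2 is invertible, then every automorphism-liftable right A-module is idempotent-liftable. -/
/-! Over a ring in which `2` is invertible, an idempotent `e` is recovered from the involution
`1 - 2e` as `e = 2⁻¹ (1 - (1 - 2e))`. The endomorphisms of `M ⧸ N` that lift to `M` form a
subring of `Module.End R (M ⧸ N)`; for an automorphism-liftable `M` it contains every unit,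
in particular `2⁻¹` and `1 - 2e`, hence every idempotent. -/

theorem IsIdempotentElem.isUnit_one_sub_two_mul {A : Type*} [Ring A] {e : A}
    (he : IsIdempotentElem e) : IsUnit (1 - 2 * e) := by
  have hsq : (1 - 2 * e) * (1 - 2 * e) = 1 :=
    calc (1 - 2 * e) * (1 - 2 * e) = 1 - 4 * e + 4 * (e * e) := by noncomm_ring
      _ = 1 := by rw [he.eq]; noncomm_ring
  exact ⟨⟨1 - 2 * e, 1 - 2 * e, hsq, hsq⟩, rfl⟩

theorem Subring.mem_of_isIdempotentElem {A : Type*} [Ring A] (S : Subring A)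
    (h2 : IsUnit (2 : A)) (hS : ∀ u : Aˣ, (u : A) ∈ S) {e : A} (he : IsIdempotentElem e) :
    e ∈ S := by
  have hrefl : 1 - 2 * e ∈ S := hS he.isUnit_one_sub_two_mul.unit
  have hhalf : ((h2.unit⁻¹ : Aˣ) : A) ∈ S := hS _
  have hdecomp : e = (h2.unit⁻¹ : Aˣ) * (1 - (1 - 2 * e)) := by
    rw [sub_sub_cancel, ← mul_assoc, h2.val_inv_mul, one_mul]
  rw [hdecomp]
  exact S.mul_mem hhalf (S.sub_mem S.one_mem hrefl)

theorem Module.End.isUnit_ofNat {R M : Type*} [Ring R] [AddCommGroup M] [Module R M]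
    (n : ℕ) [n.AtLeastTwo] (hn : IsUnit (OfNat.ofNat n : R)) :
    IsUnit (OfNat.ofNat n : Module.End R M) := by
  let c : Module.End R M := Module.End.smulLeft (hn.unit⁻¹ : Rˣ)
    (Set.units_inv_mem_center (by simp [Set.ofNat_mem_center]))
  refine ⟨⟨OfNat.ofNat n, c, ?_, ?_⟩, rfl⟩ <;> ext x <;>
    simp [c, ← ofNat_smul_eq_nsmul (R := R), smul_smul]

def Submodule.liftableEnd {R M : Type*} [Ring R] [AddCommGroup M] [Module R M] (N : Submodule R M) : Subring (Module.End R (M ⧸ N)) where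
  carrier := {fbar | ∃ f : M →ₗ[R] M, fbar ∘ₗ N.mkQ = N.mkQ ∘ₗ f}
  one_mem' := ⟨LinearMap.id, rfl⟩
  mul_mem' := by
    rintro a b ⟨f, hf⟩ ⟨g, hg⟩
    exact ⟨f ∘ₗ g, by rw [Module.End.mul_eq_comp, LinearMap.comp_assoc, hg,
      ← LinearMap.comp_assoc, hf, LinearMap.comp_assoc]⟩
  zero_mem' := ⟨0, by simp⟩
  add_mem' := by
    rintro a b ⟨f, hf⟩ ⟨g, hg⟩
    exact ⟨f + g, by rw [LinearMap.add_comp, LinearMap.comp_add, hf, hg]⟩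
  neg_mem' := by
    rintro a ⟨f, hf⟩
    exact ⟨-f, by rw [LinearMap.neg_comp, LinearMap.comp_neg, hf]⟩

theorem AutLiftable.units_mem_liftableEnd {R M : Type*} [Ring R] [AddCommGroup M] [Module R M]
    (hM : AutLiftable R M) (N : Submodule R M) (u : (Module.End R (M ⧸ N))ˣ) :
    (u : Module.End R (M ⧸ N)) ∈ N.liftableEnd :=
  hM N (LinearMap.GeneralLinearGroup.toLinearEquiv u)

/-- Over a ring in which 2 is invertible, every automorphism-liftable module is
idempotent-liftable. -/
theorem idemLiftable_of_autLiftable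
    (R M : Type*) [Ring R] [AddCommGroup M] [Module R M]
    (h2 : IsUnit (2 : R)) (hM : AutLiftable R M) :
    IdemLiftable R M := fun N _ he =>
  N.liftableEnd.mem_of_isIdempotentElem (Module.End.isUnit_ofNat 2 h2)
    (hM.units_mem_liftableEnd N) he
end

section
/- Let M = ⊕_{i∈I} M_i be a direct sum of modules such that every submodule N of M satisfies N = ⊕_{i∈I} (N ∩ M_i). Then Hom(M_i, M_j) = 0 for all i ≠ j in I. -/
/-! Let `f : Mᵢ → Mⱼ` and let `N = {x + f x | x ∈ Mᵢ}` be its graph. An element of `N ⊓ Mₖ` with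
`k ≠ i` has the form `x + f x` with `x ∈ Mᵢ` and `x ∈ Mₖ + Mⱼ`, so it vanishes by independence.
Hence the decomposition `N = ⨆ₖ (N ⊓ Mₖ)` forces `N ≤ Mᵢ`, so `f x ∈ Mᵢ ⊓ Mⱼ = 0`. -/

theorem le_of_eq_iSup_inf_of_inf_eq_bot {α ι : Type*} [CompleteLattice α] {a : ι → α} {N : α}
    {i : ι} (hN : N = ⨆ k, N ⊓ a k) (hbot : ∀ k, k ≠ i → N ⊓ a k = ⊥) : N ≤ a i := by
  rw [hN]
  refine iSup_le fun k => ?_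
  by_cases hk : k = i
  · exact hk ▸ inf_le_right
  · exact (hbot k hk).le.trans bot_le

section Graph

variable {R M : Type*} [Ring R] [AddCommGroup M] [Module R M] {P Q : Submodule R M}
  {g : P →ₗ[R] M}

theorem range_subtype_add_inf_eq_bot (hPQ : Disjoint P Q) (hg : LinearMap.range g ≤ Q)
    {K : Submodule R M} (hK : K ≤ Q) : LinearMap.range (P.subtype + g) ⊓ K = ⊥ := by
  rw [eq_bot_iff]
  rintro _ ⟨⟨x, rfl⟩, hxK⟩
  have hxQ : (x : M) ∈ Q := by
    simpa using Q.sub_mem (hK hxK) (hg ⟨x, rfl⟩)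
  have hx : x = 0 := Subtype.ext (Submodule.disjoint_def.mp hPQ x x.2 hxQ)
  simp [hx]

theorem eq_zero_of_range_subtype_add_le (hPQ : Disjoint P Q) (hg : LinearMap.range g ≤ Q)
    (hgraph : LinearMap.range (P.subtype + g) ≤ P) : g = 0 := by
  ext x
  have hgxP : g x ∈ P := by
    simpa using P.sub_mem (hgraph ⟨x, rfl⟩) x.2
  exact Submodule.disjoint_def.mp hPQ _ hgxP (hg ⟨x, rfl⟩)

end Graph

theorem hom_eq_zero_of_submodules_decompose_general
    (R M : Type*) [Ring R] [AddCommGroup M] [Module R M] {ι : Type*}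
    (Mc : ι → Submodule R M)
    (hindep : iSupIndep Mc)
    (hdec : ∀ N : Submodule R M, N = ⨆ i, N ⊓ Mc i) :
    ∀ i j : ι, i ≠ j → ∀ f : (Mc i) →ₗ[R] (Mc j), f = 0 := by
  intro i j hij f
  set Q := ⨆ (k) (_ : k ≠ i), Mc k
  have hle : ∀ k, k ≠ i → Mc k ≤ Q := fun k hk =>
    le_iSup₂ (f := fun k (_ : k ≠ i) => Mc k) k hk
  have hrange : LinearMap.range ((Mc j).subtype ∘ₗ f) ≤ Q :=
    (LinearMap.range_comp_le_range _ _).trans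
      ((Submodule.range_subtype _).le.trans (hle j hij.symm))
  have hgraph : LinearMap.range ((Mc i).subtype + (Mc j).subtype ∘ₗ f) ≤ Mc i :=
    le_of_eq_iSup_inf_of_inf_eq_bot (hdec _) fun k hk =>
      range_subtype_add_inf_eq_bot (hindep i) hrange (hle k hk)
  have hcomp := eq_zero_of_range_subtype_add_le (hindep i) hrange hgraph
  ext x
  simpa using congr($hcomp x)

/-- If `M = ⊕ᵢ Mᵢ` and every submodule `N` satisfies `N = ⊕ᵢ (N ⊓ Mᵢ)`, then
`Hom(Mᵢ, Mⱼ) = 0` for `i ≠ j`. -/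
theorem hom_eq_zero_of_submodules_decompose
    (R M : Type*) [Ring R] [AddCommGroup M] [Module R M] {ι : Type*}
    (Mc : ι → Submodule R M)
    (hindep : iSupIndep Mc) (hsup : (⨆ i, Mc i) = ⊤)
    (hdec : ∀ N : Submodule R M, N = ⨆ i, N ⊓ Mc i) :
    ∀ i j : ι, i ≠ j → ∀ f : (Mc i) →ₗ[R] (Mc j), f = 0 :=
  hom_eq_zero_of_submodules_decompose_general R M Mc hindep hdec
end

section
/- Let M = ⊕_{i∈I} M_i be a direct sum of modules such that every submodule N of M satisfies N = ⊕_{i∈I} (N ∩ M_i). Then M is automorphism-liftable if and only if each M_i is automorphism-liftable. -/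
/-!
The forward direction holds for every direct summand `A` of `M`: an automorphism of `A ⧸ N` is
transported to the isomorphic quotient of `M` by the kernel of `M → A → A ⧸ N`, lifted there, and
compressed back along the projection `M → A`.

For the converse, the decomposition hypothesis says exactly that every submodule of `M`, hence
every submodule of `M ⧸ N`, is invariant under the projections onto the `Mᵢ`. An idempotent under
which all submodules are invariant commutes with every endomorphism (a graph argument), so an
automorphism of `M ⧸ N` compresses to an automorphism of each `Mᵢ ⧸ (N ⊓ Mᵢ)`. These lift by
hypothesis, and the lifts glue to an endomorphism of `M`.
-/

section

open Module.End Submodule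

variable {R : Type*} [Ring R]

namespace Module.End

variable {M : Type*} [AddCommGroup M] [Module R M] {ρ : Module.End R M}

theorem ker_mem_invtSubmodule_of_forall_mem_invtSubmodule (hρ : IsIdempotentElem ρ)
    (hinv : ∀ S : Submodule R M, S ∈ invtSubmodule ρ) (φ : Module.End R M) :
    LinearMap.ker ρ ∈ invtSubmodule φ := by
  intro x (hx : ρ x = 0)
  show ρ (φ x) = 0
  set y := ρ (φ x)
  have hy : ρ y = y := LinearMap.congr_fun hρ.eq (φ x)
  -- `K` is the graph of `ρ ∘ φ : ker ρ → range ρ`. It contains `x + y`, so by invariance also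
  -- `ρ (x + y) = y`, which forces `y = 0`.
  let K := LinearMap.ker (ρ * φ * (1 - ρ) - ρ)
  have hxy : x + y ∈ K := by simp [K, hx, hy, y]
  have hyK : y ∈ K := by simpa [hx, hy] using hinv K hxy
  simpa [K, hy] using hyK

theorem commute_of_forall_mem_invtSubmodule (hρ : IsIdempotentElem ρ)
    (hinv : ∀ S : Submodule R M, S ∈ invtSubmodule ρ) (φ : Module.End R M) : Commute ρ φ := by
  have hinv' (S : Submodule R M) : S ∈ invtSubmodule (1 - ρ) :=
    fun _ hx ↦ S.sub_mem hx (hinv S hx)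
  refine (LinearMap.IsIdempotentElem.commute_iff hρ).mpr
    ⟨?_, ker_mem_invtSubmodule_of_forall_mem_invtSubmodule hρ hinv φ⟩
  rw [LinearMap.IsIdempotentElem.range_eq_ker_one_sub hρ]
  exact ker_mem_invtSubmodule_of_forall_mem_invtSubmodule hρ.one_sub hinv' φ

theorem mem_invtSubmodule_mapQ (hinv : ∀ S : Submodule R M, S ∈ invtSubmodule ρ)
    (N : Submodule R M) (T : Submodule R (M ⧸ N)) :
    T ∈ invtSubmodule (N.mapQ N ρ (hinv N)) := by
  intro x hx
  obtain ⟨m, rfl⟩ := N.mkQ_surjective x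
  exact hinv (T.comap N.mkQ) hx

end Module.End

section Retract

variable {M A : Type*} [AddCommGroup M] [Module R M] [AddCommGroup A] [Module R A]

theorem LinearEquiv.exists_comp_eq_comp_of_commute (σ : M ≃ₗ[R] M) (s : A →ₗ[R] M)
    (p : M →ₗ[R] A) (hps : p ∘ₗ s = LinearMap.id)
    (hσ : Commute (σ : Module.End R M) (s ∘ₗ p)) :
    ∃ τ : A ≃ₗ[R] A, s ∘ₗ τ = σ ∘ₗ s := by
  have hps' (a : A) : p (s a) = a := LinearMap.congr_fun hps a
  have hσ' (m : M) : σ (s (p m)) = s (p (σ m)) := LinearMap.congr_fun hσ m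
  have hσsymm (m : M) : σ.symm (s (p m)) = s (p (σ.symm m)) :=
    σ.symm_apply_eq.mpr (by rw [hσ', σ.apply_symm_apply])
  refine ⟨.ofLinearMap (f := p ∘ₗ σ ∘ₗ s) (g := p ∘ₗ σ.symm ∘ₗ s) ?_ ?_, ?_⟩ <;> ext a
  · simp [← hσsymm, hps']
  · simp [← hσ', hps']
  · simp [← hσ', hps']

theorem AutLiftable.of_retraction (s : A →ₗ[R] M) (p : M →ₗ[R] A)
    (hps : p ∘ₗ s = LinearMap.id) (hM : AutLiftable R M) : AutLiftable R A := by
  intro N σ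
  have hps' (a : A) : p (s a) = a := LinearMap.congr_fun hps a
  have hsurj : Function.Surjective (N.mkQ ∘ₗ p) :=
    N.mkQ_surjective.comp fun a ↦ ⟨s a, hps' a⟩
  set e := (N.mkQ ∘ₗ p).quotKerEquivOfSurjective hsurj
  obtain ⟨f, hf⟩ := hM _ (e ≪≫ₗ σ ≪≫ₗ e.symm)
  refine ⟨p ∘ₗ f ∘ₗ s, LinearMap.ext fun a ↦ ?_⟩
  have := congrArg e (LinearMap.congr_fun hf (s a))
  simpa [e, hps'] using this

theorem AutLiftable.exists_lift_of_retraction (hA : AutLiftable R A) (s : A →ₗ[R] M)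
    (p : M →ₗ[R] A) (hps : p ∘ₗ s = LinearMap.id)
    (hinv : ∀ S : Submodule R M, S ∈ invtSubmodule (s ∘ₗ p)) (N : Submodule R M)
    (σ : (M ⧸ N) ≃ₗ[R] (M ⧸ N)) :
    ∃ f : A →ₗ[R] A, N.mkQ ∘ₗ s ∘ₗ f = σ ∘ₗ N.mkQ ∘ₗ s := by
  set NA := N.comap s
  have hp : N ≤ NA.comap p := hinv N
  set e := NA.mapQ N s le_rfl
  set q := N.mapQ NA p hp
  have hqe : q ∘ₗ e = LinearMap.id := by
    ext a
    simpa [e, q] using congrArg NA.mkQ (LinearMap.congr_fun hps a)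
  have hidem : IsIdempotentElem (e ∘ₗ q) := by
    show e ∘ₗ (q ∘ₗ e) ∘ₗ q = e ∘ₗ q
    rw [hqe]
    rfl
  have heq : e ∘ₗ q = N.mapQ N (s ∘ₗ p) (hinv N) := (mapQ_comp _ _ _ _ _ _ _).symm
  have hσ : Commute (σ : Module.End R (M ⧸ N)) (e ∘ₗ q) :=
    (commute_of_forall_mem_invtSubmodule hidem (heq ▸ mem_invtSubmodule_mapQ hinv N) _).symm
  obtain ⟨τ, hτ⟩ := σ.exists_comp_eq_comp_of_commute e q hqe hσ
  obtain ⟨f, hf⟩ := hA NA τ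
  refine ⟨f, ?_⟩
  calc N.mkQ ∘ₗ s ∘ₗ f = e ∘ₗ NA.mkQ ∘ₗ f := by
        rw [← LinearMap.comp_assoc, ← LinearMap.comp_assoc, mapQ_mkQ]
    _ = e ∘ₗ τ ∘ₗ NA.mkQ := by rw [hf]
    _ = σ ∘ₗ e ∘ₗ NA.mkQ := by rw [← LinearMap.comp_assoc, hτ]; rfl
    _ = σ ∘ₗ N.mkQ ∘ₗ s := by rw [mapQ_mkQ]

end Retract

theorem LinearMap.ext_of_iSup_eq_top {M P : Type*} [AddCommGroup M] [Module R M] [AddCommGroup P]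
    [Module R P] {ι : Type*} {Mc : ι → Submodule R M} (hsup : ⨆ i, Mc i = ⊤) {f g : M →ₗ[R] P}
    (hfg : ∀ i, f ∘ₗ (Mc i).subtype = g ∘ₗ (Mc i).subtype) : f = g := by
  refine eqLocus_eq_top.mp (eq_top_iff.mpr ?_)
  exact hsup ▸ iSup_le fun i x hx ↦ LinearMap.congr_fun (hfg i) ⟨x, hx⟩

namespace DirectSum.IsInternal

variable {M : Type*} [AddCommGroup M] [Module R M] {ι : Type*} [DecidableEq ι]
  {Mc : ι → Submodule R M}

noncomputable def proj (h : IsInternal Mc) (i : ι) : M →ₗ[R] Mc i :=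
  component R ι (fun i ↦ Mc i) i ∘ₗ (LinearEquiv.ofBijective (coeLinearMap Mc) h).symm

theorem proj_comp_subtype (h : IsInternal Mc) (i : ι) : h.proj i ∘ₗ (Mc i).subtype = LinearMap.id :=
  LinearMap.ext fun x ↦ h.ofBijective_coeLinearMap_same x

theorem mem_invtSubmodule_subtype_comp_proj (h : IsInternal Mc) {S : Submodule R M}
    (hS : S = ⨆ j, S ⊓ Mc j) (i : ι) : S ∈ invtSubmodule ((Mc i).subtype ∘ₗ h.proj i) := by
  rw [mem_invtSubmodule]
  conv_lhs => rw [hS]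
  refine iSup_le fun j x hx ↦ ?_
  obtain rfl | hji := eq_or_ne j i
  · change ((LinearEquiv.ofBijective (coeLinearMap Mc) h).symm x j : M) ∈ S
    rw [h.ofBijective_coeLinearMap_of_mem hx.2]
    exact hx.1
  · change ((LinearEquiv.ofBijective (coeLinearMap Mc) h).symm x i : M) ∈ S
    rw [h.ofBijective_coeLinearMap_of_mem_ne hji hx.2]
    exact S.zero_mem

theorem exists_comp_subtype_eq (h : IsInternal Mc) {P : Type*} [AddCommGroup P] [Module R P]
    (g : ∀ i, Mc i →ₗ[R] P) : ∃ f : M →ₗ[R] P, ∀ i, f ∘ₗ (Mc i).subtype = g i :=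
  ⟨toModule R ι P g ∘ₗ (LinearEquiv.ofBijective (coeLinearMap Mc) h).symm, fun i ↦
    LinearMap.ext fun x ↦ by
      have hx : (LinearEquiv.ofBijective (coeLinearMap Mc) h).symm x = lof R ι _ i x :=
        (LinearEquiv.symm_apply_eq _).mpr (coeLinearMap_lof Mc i x).symm
      simp [hx]⟩

end DirectSum.IsInternal

end

/-- If `M = ⊕ᵢ Mᵢ` and every submodule `N` satisfies `N = ⊕ᵢ (N ⊓ Mᵢ)`, then `M` is
automorphism-liftable iff every `Mᵢ` is automorphism-liftable. -/
theorem autLiftable_iff_forall_component_autLiftable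
    (R M : Type*) [Ring R] [AddCommGroup M] [Module R M] {ι : Type*}
    (Mc : ι → Submodule R M)
    (hindep : iSupIndep Mc) (hsup : (⨆ i, Mc i) = ⊤)
    (hdec : ∀ N : Submodule R M, N = ⨆ i, N ⊓ Mc i) :
    AutLiftable R M ↔ ∀ i : ι, AutLiftable R (Mc i) := by
  classical
  have h : DirectSum.IsInternal Mc :=
    DirectSum.isInternal_submodule_of_iSupIndep_of_iSup_eq_top hindep hsup
  refine ⟨fun hM i ↦ hM.of_retraction _ _ (h.proj_comp_subtype i), fun hc N σ ↦ ?_⟩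
  have hlift (i : ι) : ∃ f : Mc i →ₗ[R] Mc i,
      N.mkQ ∘ₗ (Mc i).subtype ∘ₗ f = σ ∘ₗ N.mkQ ∘ₗ (Mc i).subtype :=
    (hc i).exists_lift_of_retraction _ _ (h.proj_comp_subtype i)
      (fun S ↦ h.mem_invtSubmodule_subtype_comp_proj (hdec S) i) N σ
  choose f hf using hlift
  obtain ⟨F, hF⟩ := h.exists_comp_subtype_eq fun i ↦ (Mc i).subtype ∘ₗ f i
  refine ⟨F, LinearMap.ext_of_iSup_eq_top hsup fun i ↦ ?_⟩
  rw [LinearMap.comp_assoc, LinearMap.comp_assoc, hF, hf]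
end

section
/- If an automorphism-liftable module M is the direct sum of submodules X and Y, then X and Y are automorphism-liftable. -/
/-! A direct summand `X` of `M` is a retract of `M`. For `N ≤ X`, the surjection `M → X → X ⧸ N`
exhibits `X ⧸ N` as a factor module of `M`, so an automorphism of `X ⧸ N` lifts to an
endomorphism of `M`, which the retraction compresses back to `X`. -/

section

variable {R M E : Type*} [Ring R] [AddCommGroup M] [Module R M] [AddCommGroup E] [Module R E]

theorem AutLiftable.exists_lift_of_surjective {Q : Type*} [AddCommGroup Q] [Module R Q]
    (hM : AutLiftable R M) (q : M →ₗ[R] Q) (hq : Function.Surjective q) (g : Q ≃ₗ[R] Q) :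
    ∃ f : M →ₗ[R] M, (g : Q →ₗ[R] Q) ∘ₗ q = q ∘ₗ f := by
  set e := q.quotKerEquivOfSurjective hq
  obtain ⟨f, hf⟩ := hM (LinearMap.ker q) (e ≪≫ₗ g ≪≫ₗ e.symm)
  refine ⟨f, LinearMap.ext fun m => ?_⟩
  have hfm := congrArg e (LinearMap.congr_fun hf m)
  simpa [e] using hfm

theorem AutLiftable.of_retract (hM : AutLiftable R M) (i : E →ₗ[R] M) (p : M →ₗ[R] E)
    (hpi : p ∘ₗ i = LinearMap.id) : AutLiftable R E := by
  intro N fbar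
  have hpi_apply (x : E) : p (i x) = x := LinearMap.congr_fun hpi x
  have hq : Function.Surjective (N.mkQ ∘ₗ p) :=
    N.mkQ_surjective.comp fun x => ⟨i x, hpi_apply x⟩
  obtain ⟨f, hf⟩ := hM.exists_lift_of_surjective (N.mkQ ∘ₗ p) hq fbar
  refine ⟨p ∘ₗ f ∘ₗ i, LinearMap.ext fun x => ?_⟩
  simpa [hpi_apply] using LinearMap.congr_fun hf (i x)

theorem AutLiftable.of_isCompl (hM : AutLiftable R M) {X Y : Submodule R M} (hXY : IsCompl X Y) :
    AutLiftable R X :=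
  hM.of_retract X.subtype _ (Submodule.projectionOnto_comp_subtype hXY)

end

/-- Direct summands of an automorphism-liftable module are automorphism-liftable. -/
theorem summands_autLiftable_of_autLiftable
    (R M : Type*) [Ring R] [AddCommGroup M] [Module R M]
    (X Y : Submodule R M) (hXY : IsCompl X Y) (hM : AutLiftable R M) :
    AutLiftable R X ∧ AutLiftable R Y :=
  ⟨hM.of_isCompl hXY, hM.of_isCompl hXY.symm⟩
end

section
/- If an automorphism-liftable module M is the direct sum of submodules X and Y, then X is projective with respect to Y (Y-projective) and Y is projective with respect to X. -/
/-- `X` is projective with respect to `Y` if every homomorphism from `X` to a factor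
module of `Y` lifts to a homomorphism `X → Y` along the natural projection. -/
def RelProjective (R X Y : Type*) [Ring R] [AddCommGroup X] [Module R X]
    [AddCommGroup Y] [Module R Y] : Prop :=
  ∀ (P : Submodule R Y) (fbar : X →ₗ[R] Y ⧸ P),
    ∃ f : X →ₗ[R] Y, P.mkQ ∘ₗ f = fbar

/-!
Given `P ≤ Y` and `fbar : X → Y ⧸ P`, let `N` be `P` viewed in `M`, so that `M ⧸ N = X ⊕ Y ⧸ P`.
The endomorphism `u` of `M ⧸ N` sending the `X`-component through `fbar` into `Y ⧸ P` kills
`Y ⧸ P`, hence `u² = 0` and `1 + u` is an automorphism. A lift `f` of it to `M` satisfies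
`f x ≡ x + fbar x (mod N)` for `x ∈ X`, so the `Y`-component of `f x` lifts `fbar x`.
-/

section

variable {R M : Type*} [Ring R] [AddCommGroup M] [Module R M]

/-- For square-zero `u`, `1 + u` is an automorphism with inverse `1 - u`. -/
theorem AutLiftable.exists_lift_one_add_of_mul_self_eq_zero (hM : AutLiftable R M)
    (N : Submodule R M) {u : Module.End R (M ⧸ N)} (hu : u * u = 0) :
    ∃ f : M →ₗ[R] M, (1 + u) ∘ₗ N.mkQ = N.mkQ ∘ₗ f := by
  have h₁ : (1 + u) * (1 - u) = 1 := by
    rw [← (Commute.one_left u).mul_self_sub_mul_self_eq, hu, mul_one, sub_zero]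
  have h₂ : (1 - u) * (1 + u) = 1 := by
    rw [← (Commute.one_left u).mul_self_sub_mul_self_eq', hu, mul_one, sub_zero]
  exact hM N (LinearEquiv.ofLinearMap (1 + u) (1 - u) h₁ h₂)

theorem AutLiftable.relProjective_of_isCompl (hM : AutLiftable R M) {X Y : Submodule R M}
    (hXY : IsCompl X Y) : RelProjective R X Y := by
  intro P fbar
  let N := P.map Y.subtype
  let prX := X.projectionOnto Y hXY
  let prY := Y.projectionOnto X hXY.symm
  let j : Y ⧸ P →ₗ[R] M ⧸ N := P.mapQ N Y.subtype (P.le_comap_map Y.subtype)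
  let q : M ⧸ N →ₗ[R] X := N.liftQ prX (by
    rw [Submodule.ker_projectionOnto]; exact Submodule.map_subtype_le Y P)
  let r : M ⧸ N →ₗ[R] Y ⧸ P := N.mapQ P prY (by
    rw [Submodule.map_le_iff_le_comap, ← Submodule.comap_comp, Y.projectionOnto_comp_subtype hXY.symm, Submodule.comap_id])
  let u : Module.End R (M ⧸ N) := j ∘ₗ fbar ∘ₗ q
  have hqj : ∀ y, q (j y) = 0 := by
    intro y
    obtain ⟨y, rfl⟩ := P.mkQ_surjective y
    simp [q, j, prX]
  have hu : u * u = 0 := LinearMap.ext fun z => by simp [u, hqj]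
  obtain ⟨f, hf⟩ := hM.exists_lift_one_add_of_mul_self_eq_zero N hu
  refine ⟨prY ∘ₗ f ∘ₗ X.subtype, ?_⟩
  ext x
  have hfx : N.mkQ x + j (fbar (q (N.mkQ x))) = N.mkQ (f x) := LinearMap.congr_fun hf x
  have hrj : ∀ y, r (j y) = y := by
    intro y
    obtain ⟨y, rfl⟩ := P.mkQ_surjective y
    simp [r, j, prY]
  calc P.mkQ (prY (f x)) = r (N.mkQ (f x)) := rfl
    _ = fbar x := by simp [← hfx, hrj, r, q, prX, prY]

end

/-- If an automorphism-liftable module is the direct sum of `X` and `Y`, then `X` and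
`Y` are projective with respect to each other. -/
theorem summands_relProjective_of_autLiftable
    (R M : Type*) [Ring R] [AddCommGroup M] [Module R M]
    (X Y : Submodule R M) (hXY : IsCompl X Y) (hM : AutLiftable R M) :
    RelProjective R X Y ∧ RelProjective R Y X :=
  ⟨hM.relProjective_of_isCompl hXY, hM.relProjective_of_isCompl hXY.symm⟩
end

section
/- The Prüfer group ℤ(p^∞) is an endomorphism-liftable ℤ-module. -/
/-- The Prüfer `p`-group `ℤ(p^∞)`, realized as `ℤ[1/p] ⧸ ℤ`. -/
abbrev PruferModule (p : ℕ) :=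
  Localization.Away (p : ℤ) ⧸
    Submodule.span ℤ {(1 : Localization.Away (p : ℤ))}

/-!
A proper subgroup `N` of `ℤ(p^∞)` is determined by the largest `n` with `1/p^n ∈ N`, and it is then
the `p^n`-torsion subgroup, since every cyclic subgroup is generated by some `1/p^m`. As
multiplication by `p^n` is onto, it induces an isomorphism `e : ℤ(p^∞)/N ≃ ℤ(p^∞)` with
`h ∘ e = p^n • id`, and `e ∘ f̄ ∘ e⁻¹` lifts `f̄` because `f̄` commutes with `p^n • id`.
-/

open Submodule

section Lifting

variable {R M : Type*} [CommRing R] [AddCommGroup M] [Module R M]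

theorem exists_lift_of_surjective_smul {c : R} (hc : Function.Surjective (c • · : M → M))
    (fbar : (M ⧸ torsionBy R M c) →ₗ[R] M ⧸ torsionBy R M c) :
    ∃ f : M →ₗ[R] M, fbar ∘ₗ (torsionBy R M c).mkQ = (torsionBy R M c).mkQ ∘ₗ f := by
  let e : (M ⧸ torsionBy R M c) ≃ₗ[R] M :=
    (DistribSMul.toLinearMap R M c).quotKerEquivOfSurjective hc
  have mkQ_e : ∀ z, (torsionBy R M c).mkQ (e z) = c • z := by
    rintro ⟨y⟩
    rfl
  refine ⟨e.toLinearMap ∘ₗ fbar ∘ₗ e.symm.toLinearMap, LinearMap.ext fun x => ?_⟩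
  calc fbar ((torsionBy R M c).mkQ x) = fbar (c • e.symm x) := by
        rw [← mkQ_e, e.apply_symm_apply]
    _ = (torsionBy R M c).mkQ (e (fbar (e.symm x))) := by rw [map_smul, mkQ_e]

theorem endLiftable_of_forall_ne_top_eq_torsionBy
    (h : ∀ N : Submodule R M, N ≠ ⊤ →
      ∃ c : R, Function.Surjective (c • · : M → M) ∧ N = torsionBy R M c) :
    EndLiftable R M := by
  intro N fbar
  by_cases hN : N = ⊤
  · subst hN
    exact ⟨0, Subsingleton.elim _ _⟩
  · obtain ⟨c, hc, rfl⟩ := h N hN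
    exact exists_lift_of_surjective_smul hc fbar

end Lifting

namespace PruferModule

open IsLocalization.Away

variable (p : ℕ)

noncomputable def gen (m : ℕ) : PruferModule p :=
  Submodule.Quotient.mk ((invSelf (p : ℤ) : Localization.Away (p : ℤ)) ^ m)

variable {p}

theorem natCast_mul_invSelf : (p : Localization.Away (p : ℤ)) * invSelf (p : ℤ) = 1 := by
  simpa using mul_invSelf (S := Localization.Away (p : ℤ)) (p : ℤ)

theorem pow_smul_gen_add (k m : ℕ) : (p : ℤ) ^ k • gen p (m + k) = gen p m := by
  rw [gen, gen, ← Submodule.Quotient.mk_smul, pow_add, zsmul_eq_mul, mul_left_comm]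
  push_cast
  rw [← mul_pow, natCast_mul_invSelf, one_pow, mul_one]

theorem gen_zero : gen p 0 = 0 := by
  rw [gen, pow_zero, Submodule.Quotient.mk_eq_zero]
  exact mem_span_singleton_self 1

theorem pow_smul_gen_self (m : ℕ) : (p : ℤ) ^ m • gen p m = 0 := by
  simpa [gen_zero] using pow_smul_gen_add (p := p) m 0

theorem exists_eq_zsmul_gen (x : PruferModule p) : ∃ (k : ℤ) (m : ℕ), x = k • gen p m := by
  obtain ⟨z, rfl⟩ := Submodule.Quotient.mk_surjective _ x
  obtain ⟨m, k, hz⟩ := surj (p : ℤ) z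
  refine ⟨k, m, ?_⟩
  rw [gen, ← Submodule.Quotient.mk_smul]
  congr 1
  calc z = z * ((p : Localization.Away (p : ℤ)) * invSelf (p : ℤ)) ^ m := by
        rw [natCast_mul_invSelf, one_pow, mul_one]
    _ = k • invSelf (p : ℤ) ^ m := by
        simp only [eq_intCast, Int.cast_natCast] at hz
        rw [mul_pow, ← mul_assoc, hz, zsmul_eq_mul]

theorem gen_eq_zero_iff (hp : 1 < p) {m : ℕ} : gen p m = 0 ↔ m = 0 := by
  refine ⟨fun hm => ?_, fun hm => hm ▸ gen_zero⟩
  by_contra hm0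
  have hgen : gen p 1 = 0 := by
    rw [← pow_smul_gen_add (m - 1) 1, Nat.add_sub_cancel' (Nat.one_le_iff_ne_zero.2 hm0), hm,
      smul_zero]
  rw [gen, pow_one, Submodule.Quotient.mk_eq_zero, mem_span_singleton] at hgen
  obtain ⟨c, hc⟩ := hgen
  have hinj : Function.Injective (algebraMap ℤ (Localization.Away (p : ℤ))) :=
    IsLocalization.injective _
      (powers_le_nonZeroDivisors_of_noZeroDivisors (by omega : (p : ℤ) ≠ 0))
  have hpc : (p : ℤ) * c = 1 := hinj <| by
    rw [map_mul, map_one, ← natCast_mul_invSelf, ← hc]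
    simp
  have := Int.eq_one_or_neg_one_of_mul_eq_one hpc
  omega

theorem pow_smul_gen_eq_zero_iff (hp : 1 < p) {n m : ℕ} : (p : ℤ) ^ n • gen p m = 0 ↔ m ≤ n := by
  refine ⟨fun h => ?_, fun h => ?_⟩
  · by_contra! hnm
    rw [← Nat.sub_add_cancel hnm.le, pow_smul_gen_add, gen_eq_zero_iff hp] at h
    omega
  · rw [← Nat.sub_add_cancel h, pow_add, mul_smul, pow_smul_gen_self, smul_zero]

theorem pow_smul_surjective (n : ℕ) :
    Function.Surjective ((p : ℤ) ^ n • · : PruferModule p → PruferModule p) := by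
  intro x
  obtain ⟨k, m, rfl⟩ := exists_eq_zsmul_gen x
  exact ⟨k • gen p (m + n), by dsimp only; rw [smul_comm, pow_smul_gen_add]⟩

theorem exists_span_zsmul_gen_eq (hp : p.Prime) (k : ℤ) (m : ℕ) :
    ∃ m', span ℤ {k • gen p m} = span ℤ {gen p m'} := by
  induction m generalizing k with
  | zero => exact ⟨0, by rw [gen_zero, smul_zero]⟩
  | succ m ih =>
    by_cases hk : (p : ℤ) ∣ k
    · obtain ⟨k, rfl⟩ := hk
      obtain ⟨m', hm'⟩ := ih k
      refine ⟨m', ?_⟩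
      rw [← hm', ← pow_smul_gen_add 1 m, pow_one, mul_comm, mul_smul]
    · obtain ⟨a, b, hab⟩ :=
        ((Nat.prime_iff_prime_int.mp hp).coprime_iff_not_dvd.mpr hk).pow_left (m := m + 1)
      refine ⟨m + 1, le_antisymm ((span_singleton_le_iff_mem _ _).2
        (smul_mem _ _ (mem_span_singleton_self _))) ?_⟩
      -- `k` is invertible modulo `p ^ (m + 1)`, which kills `gen p (m + 1)`.
      rw [span_singleton_le_iff_mem, mem_span_singleton]
      refine ⟨b, ?_⟩
      calc b • k • gen p (m + 1) = (a * (p : ℤ) ^ (m + 1) + b * k) • gen p (m + 1) := by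
            rw [add_smul, mul_smul a, pow_smul_gen_self, smul_zero, zero_add, mul_smul]
        _ = gen p (m + 1) := by rw [hab, one_smul]

theorem exists_span_singleton_eq_span_gen (hp : p.Prime) (x : PruferModule p) :
    ∃ m, span ℤ {x} = span ℤ {gen p m} := by
  obtain ⟨k, m, rfl⟩ := exists_eq_zsmul_gen x
  exact exists_span_zsmul_gen_eq hp k m

theorem exists_eq_torsionBy (hp : p.Prime) {N : Submodule ℤ (PruferModule p)} (hN : N ≠ ⊤) :
    ∃ n : ℕ, N = torsionBy ℤ (PruferModule p) ((p : ℤ) ^ n) := by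
  have hlower : IsLowerSet (gen p ⁻¹' N) := fun a b hba ha => by
    simp only [Set.mem_preimage, SetLike.mem_coe] at ha ⊢
    rw [← pow_smul_gen_add (a - b) b, Nat.add_sub_cancel' hba]
    exact N.smul_mem _ ha
  obtain hall | ⟨a, ha⟩ := hlower.eq_univ_or_Iio
  · refine absurd (eq_top_iff.2 fun x _ => ?_) hN
    obtain ⟨k, m, rfl⟩ := exists_eq_zsmul_gen x
    exact N.smul_mem k (show m ∈ gen p ⁻¹' N from hall ▸ Set.mem_univ m)
  · have hmem : ∀ m, gen p m ∈ N ↔ m < a := fun m => Set.ext_iff.mp ha m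
    have ha0 : 0 < a := (hmem 0).1 (gen_zero (p := p) ▸ N.zero_mem)
    refine ⟨a - 1, ext fun x => ?_⟩
    obtain ⟨m, hm⟩ := exists_span_singleton_eq_span_gen hp x
    rw [← span_singleton_le_iff_mem, hm, span_singleton_le_iff_mem, hmem,
      ← span_singleton_le_iff_mem x, hm, span_singleton_le_iff_mem, mem_torsionBy_iff,
      pow_smul_gen_eq_zero_iff hp.one_lt]
    omega

end PruferModule

/-- The Prüfer group `ℤ(p^∞)` is an endomorphism-liftable `ℤ`-module. -/
theorem pruferModule_endLiftable (p : ℕ) (hp : p.Prime) :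
    EndLiftable ℤ (PruferModule p) :=
  endLiftable_of_forall_ne_top_eq_torsionBy fun _ hN =>
    let ⟨n, hn⟩ := PruferModule.exists_eq_torsionBy hp hN
    ⟨_, PruferModule.pow_smul_surjective n, hn⟩
end

section
/- The Prüfer group ℤ(p^∞) is not a quasi-projective ℤ-module. -/
/-!
If `M` is quasi-projective, every surjective endomorphism `g` of `M` has a section: lift the
inverse of `M ⧸ ker g ≃ M` along the projection. When `g` is multiplication by a scalar, the
section commutes with `g`, so `g` is also injective. On `ℤ(p^∞)` multiplication by `p` is
surjective but kills the class of `1/p`.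
-/

section QuasiProjective

variable {R M : Type*}

theorem QuasiProjective.exists_comp_eq_id_of_surjective [Ring R] [AddCommGroup M] [Module R M]
    (hM : QuasiProjective R M) {g : M →ₗ[R] M} (hg : Function.Surjective g) :
    ∃ f : M →ₗ[R] M, g ∘ₗ f = LinearMap.id := by
  let e := g.quotKerEquivOfSurjective hg
  obtain ⟨f, hf⟩ := hM (LinearMap.ker g) e.symm
  refine ⟨f, LinearMap.ext fun x => ?_⟩
  simpa [e] using congr(e ($hf x))

theorem QuasiProjective.smul_injective_of_surjective [CommRing R] [AddCommGroup M] [Module R M]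
    (hM : QuasiProjective R M) {r : R} (hr : Function.Surjective (r • · : M → M)) :
    Function.Injective (r • · : M → M) := by
  obtain ⟨f, hf⟩ := hM.exists_comp_eq_id_of_surjective (g := LinearMap.lsmul R M r) hr
  have hrf (x : M) : r • f x = x := LinearMap.congr_fun hf x
  refine (injective_iff_map_eq_zero (DistribSMul.toAddMonoidHom M r)).2 fun x hx => ?_
  rw [← hrf x, ← map_smul, show r • x = 0 from hx, map_zero]

end QuasiProjective

namespace IsLocalization.Away

variable {S : Type*} [CommRing S] [Algebra ℤ S] (x : ℤ) [IsLocalization.Away x S]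

theorem intCast_mul_invSelf : (x : S) * invSelf x = 1 := by
  rw [← eq_intCast (algebraMap ℤ S), mul_invSelf]

theorem zsmul_invSelf : x • invSelf (S := S) x = 1 := by
  rw [zsmul_eq_mul, intCast_mul_invSelf]

end IsLocalization.Away

namespace PruferModule

open IsLocalization.Away

variable (p : ℕ)

theorem smul_surjective :
    Function.Surjective ((p : ℤ) • · : PruferModule p → PruferModule p) := by
  intro x
  obtain ⟨y, rfl⟩ := Submodule.mkQ_surjective _ x
  refine ⟨Submodule.Quotient.mk (IsLocalization.Away.invSelf (p : ℤ) * y), ?_⟩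
  dsimp only
  rw [← Submodule.Quotient.mk_smul, ← smul_mul_assoc, zsmul_invSelf, one_mul,
    Submodule.mkQ_apply]

noncomputable def invSelf : PruferModule p :=
  Submodule.Quotient.mk (IsLocalization.Away.invSelf (p : ℤ))

theorem smul_invSelf : (p : ℤ) • invSelf p = 0 := by
  rw [invSelf, ← Submodule.Quotient.mk_smul, Submodule.Quotient.mk_eq_zero, zsmul_invSelf]
  exact Submodule.mem_span_singleton_self _

variable {p}

theorem invSelf_ne_zero (hp : 1 < p) : invSelf p ≠ 0 := by
  have hp0 : (p : ℤ) ≠ 0 := by omega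
  have hinj : Function.Injective (Int.cast : ℤ → Localization.Away (p : ℤ)) := fun a b h =>
    IsLocalization.injective (Localization.Away (p : ℤ))
      (powers_le_nonZeroDivisors_of_noZeroDivisors hp0) (by simpa only [eq_intCast] using h)
  rw [invSelf, Ne, Submodule.Quotient.mk_eq_zero, Submodule.mem_span_singleton]
  rintro ⟨n, hn⟩
  have hpn : ((p * n : ℤ) : Localization.Away (p : ℤ)) = ((1 : ℤ) : _) := by
    rw [Int.cast_mul, ← zsmul_one n, hn, Int.cast_one, intCast_mul_invSelf]
  have := Int.eq_one_or_neg_one_of_mul_eq_one (hinj hpn)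
  omega

end PruferModule

/-- The Prüfer group `ℤ(p^∞)` is not a quasi-projective `ℤ`-module. -/
theorem pruferModule_not_quasiProjective (p : ℕ) (hp : p.Prime) :
    ¬ QuasiProjective ℤ (PruferModule p) := fun hM =>
  PruferModule.invSelf_ne_zero hp.one_lt <|
    hM.smul_injective_of_surjective (PruferModule.smul_surjective p) <| by
      simp only [PruferModule.smul_invSelf, smul_zero]
end
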